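/- Let σ ∈ S_n be a permutation satisfying Σ_{w ∈ R(σ)} d_B(w) ≤ |R(σ)| (equivalently, the number of braid edges of G(σ) is at most |R(σ)|/2). Then the number of braid classes satisfies |B(σ)| ≥ (1/2)·|R(σ)| − 1, and the number of commutation classes satisfies |C(σ)| ≤ (1/2)·|R(σ)| + 2. -/

import Mathlib

/-!
By Matsumoto's theorem, any two reduced words of `σ` are connected by commutation and braid
moves. As these moves preserve the set of letters, `R σ` is finite, and adding the braid edges
to the commutation graph leaves a single class. Adding one edge to a graph merges at most two
classes, so with `E` the number of braid edges (`2 E = Σ d_B ≤ |R σ|`) we get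
`|R σ| ≤ |B(σ)| + E` and `|C(σ)| ≤ 1 + E`.
-/

namespace RW

/-- The simple transposition `s i = (i, i+1)`, acting on `ℕ` (points are `1, …, n`;
the point `0` is unused, matching the paper's 1-indexed conventions). -/
def s (i : ℕ) : Equiv.Perm ℕ := Equiv.swap i (i + 1)

/-- The product `s i₁ * s i₂ * ⋯ * s iₗ` of the word `w = [i₁, …, iₗ]`. -/
def π (w : List ℕ) : Equiv.Perm ℕ := (w.map s).prod

/-- The copy of the symmetric group `S_n` inside `Equiv.Perm ℕ`: permutations of
`{1, …, n}`, i.e. fixing `0` and every point `> n`. -/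
def Sn (n : ℕ) : Set (Equiv.Perm ℕ) := {σ | ∀ m : ℕ, (m = 0 ∨ n < m) → σ m = m}

/-- The length `ℓ(σ)`: the number of inversions of `σ`. -/
noncomputable def len (σ : Equiv.Perm ℕ) : ℕ :=
  Nat.card {p : ℕ × ℕ // p.1 < p.2 ∧ σ p.2 < σ p.1}

/-- `w` is a reduced word for `σ`: its product is `σ` and its length is `ℓ(σ)`. -/
def Reduced (σ : Equiv.Perm ℕ) (w : List ℕ) : Prop :=
  π w = σ ∧ w.length = len σ

/-- `R σ`: the set of reduced words of `σ`. -/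
def R (σ : Equiv.Perm ℕ) : Set (List ℕ) := {w | Reduced σ w}

/-- The descent set `Des σ = {i ≥ 1 | σ(i) > σ(i+1)}`. -/
def Des (σ : Equiv.Perm ℕ) : Set ℕ := {i | 1 ≤ i ∧ σ (i + 1) < σ i}

/-- A single commutation move: swap two adjacent letters `a, b` with `|a - b| > 1`. -/
def CommMove (w w' : List ℕ) : Prop :=
  ∃ u v : List ℕ, ∃ a b : ℕ, 1 < ((a : ℤ) - (b : ℤ)).natAbs ∧
    w = u ++ a :: b :: v ∧ w' = u ++ b :: a :: v

/-- A single braid move: replace consecutive letters `(a, a+1, a)` by `(a+1, a, a+1)`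
or vice versa. -/
def BraidMove (w w' : List ℕ) : Prop :=
  ∃ u v : List ℕ, ∃ a : ℕ,
    (w = u ++ a :: (a+1) :: a :: v ∧ w' = u ++ (a+1) :: a :: (a+1) :: v) ∨
    (w = u ++ (a+1) :: a :: (a+1) :: v ∧ w' = u ++ a :: (a+1) :: a :: v)

/-- The braid degree of a word: the number of words obtainable from it by a single
braid move.  (For `w ∈ R σ` these are exactly the braid-edge neighbours of `w` in
`G(σ)`, since a braid move sends reduced words of `σ` to reduced words of `σ`.) -/
noncomputable def dB (w : List ℕ) : ℕ := Nat.card {w' : List ℕ // BraidMove w w'}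

/-- The commutation degree of a word: the number of words obtainable from it by a
single commutation move. -/
noncomputable def dC (w : List ℕ) : ℕ := Nat.card {w' : List ℕ // CommMove w w'}

/-- The number `|B(σ)|` of braid classes: classes of `R σ` under the equivalence
generated by single braid moves. -/
noncomputable def nB (σ : Equiv.Perm ℕ) : ℕ :=
  Nat.card (Quot (fun w w' : R σ => BraidMove w.1 w'.1))

/-- The number `|C(σ)|` of commutation classes. -/
noncomputable def nC (σ : Equiv.Perm ℕ) : ℕ :=
  Nat.card (Quot (fun w w' : R σ => CommMove w.1 w'.1))

/-- The underlying function of `w₀^{(k,i)}`: reverse the interval `{i, …, i+k-1}`. -/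
def w0fun (k i : ℕ) : ℕ → ℕ := fun m => if i ≤ m ∧ m < i + k then i + (i + k - 1) - m else m

theorem w0fun_involutive (k i : ℕ) : Function.Involutive (w0fun k i) := by
  intro m
  unfold w0fun
  split_ifs <;> omega

/-- `w₀^{(k,i)}`: the permutation fixing every point outside `{i, …, i+k-1}` and
reversing that interval. -/
def w0 (k i : ℕ) : Equiv.Perm ℕ := (w0fun_involutive k i).toPerm

/-- Right weak order: `τ ≤ σ` iff `ℓ(τ) + ℓ(τ⁻¹σ) = ℓ(σ)`. -/
def wle (τ σ : Equiv.Perm ℕ) : Prop := len τ + len (τ⁻¹ * σ) = len σ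

/-- The support of `σ`: the letters appearing in some reduced word of `σ`. -/
def supp (σ : Equiv.Perm ℕ) : Set ℕ := {a | ∃ w, Reduced σ w ∧ a ∈ w}

lemma π_cons (a : ℕ) (w : List ℕ) : π (a :: w) = s a * π w := by
  simp [π]

lemma π_append (u v : List ℕ) : π (u ++ v) = π u * π v := by
  simp [π]

lemma s_apply (a m : ℕ) : s a m = if m = a then a + 1 else if m = a + 1 then a else m := by
  simp [s, Equiv.swap_apply_def]

lemma s_apply_self (a : ℕ) : s a a = a + 1 := Equiv.swap_apply_left _ _

lemma s_apply_succ_self (a : ℕ) : s a (a + 1) = a := Equiv.swap_apply_right _ _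

lemma s_inv (a : ℕ) : (s a)⁻¹ = s a := Equiv.swap_inv _ _

lemma s_mul_self_mul (a : ℕ) (σ : Equiv.Perm ℕ) : s a * (s a * σ) = σ :=
  Equiv.swap_mul_self_mul _ _ _

lemma s_mul_s_succ_mul_s (a : ℕ) : s a * s (a + 1) * s a = s (a + 1) * s a * s (a + 1) := by
  ext m
  simp only [Equiv.Perm.mul_apply, s_apply]
  split_ifs <;> omega

lemma s_mul_comm {a b : ℕ} (h : 1 < ((a : ℤ) - (b : ℤ)).natAbs) : s a * s b = s b * s a := by
  ext m
  simp only [Equiv.Perm.mul_apply, s_apply]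
  split_ifs <;> omega

def inversions (σ : Equiv.Perm ℕ) : Set (ℕ × ℕ) := {p | p.1 < p.2 ∧ σ p.2 < σ p.1}

lemma len_eq_ncard_inversions (σ : Equiv.Perm ℕ) : len σ = (inversions σ).ncard :=
  Nat.card_coe_set_eq _

lemma inversions_one : inversions 1 = ∅ := by
  ext
  simp only [inversions, Equiv.Perm.one_apply, Set.mem_ofPred_eq, Set.mem_empty_iff_false,
    iff_false]
  omega

def IsLeftDescent (a : ℕ) (σ : Equiv.Perm ℕ) : Prop := σ⁻¹ (a + 1) < σ⁻¹ a

lemma s_mul_inv_apply (a : ℕ) (σ : Equiv.Perm ℕ) (m : ℕ) :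
    (s a * σ)⁻¹ m = σ⁻¹ (s a m) := by
  rw [mul_inv_rev, s_inv, Equiv.Perm.mul_apply]

lemma s_apply_lt_s_apply_iff (a x y : ℕ) :
    s a x < s a y ↔ (x < y ∧ ¬(x = a ∧ y = a + 1)) ∨ (x = a + 1 ∧ y = a) := by
  simp only [s_apply]
  split_ifs <;> omega

lemma inversions_s_mul_subset (a : ℕ) (σ : Equiv.Perm ℕ) :
    inversions (s a * σ) ⊆ insert (σ⁻¹ a, σ⁻¹ (a + 1)) (inversions σ) := by
  rintro ⟨p, q⟩ ⟨hpq, hinv⟩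
  rw [Equiv.Perm.mul_apply, Equiv.Perm.mul_apply, s_apply_lt_s_apply_iff] at hinv
  rcases hinv with ⟨hlt, -⟩ | ⟨hq, hp⟩
  · exact Or.inr ⟨hpq, hlt⟩
  · exact Or.inl (Prod.ext (Equiv.Perm.eq_inv_iff_eq.mpr hp) (Equiv.Perm.eq_inv_iff_eq.mpr hq))

lemma inversions_s_mul_of_not_isLeftDescent {a : ℕ} {σ : Equiv.Perm ℕ}
    (h : ¬ IsLeftDescent a σ) :
    inversions (s a * σ) = insert (σ⁻¹ a, σ⁻¹ (a + 1)) (inversions σ) := by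
  refine (inversions_s_mul_subset a σ).antisymm (Set.insert_subset ?_ ?_)
  · have hne : σ⁻¹ a ≠ σ⁻¹ (a + 1) := by simp
    refine ⟨by unfold IsLeftDescent at h; omega, ?_⟩
    simp [s_apply_self, s_apply_succ_self]
  · rintro ⟨p, q⟩ ⟨hpq, hlt⟩
    refine ⟨hpq, ?_⟩
    rw [Equiv.Perm.mul_apply, Equiv.Perm.mul_apply, s_apply_lt_s_apply_iff]
    refine Or.inl ⟨hlt, ?_⟩
    rintro ⟨hq, hp⟩
    rw [← Equiv.Perm.eq_inv_iff_eq] at hp hq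
    unfold IsLeftDescent at h
    omega

lemma isLeftDescent_s_mul_self_iff {a : ℕ} {σ : Equiv.Perm ℕ} :
    IsLeftDescent a (s a * σ) ↔ ¬ IsLeftDescent a σ := by
  have hne : σ⁻¹ a ≠ σ⁻¹ (a + 1) := by simp
  rw [IsLeftDescent, IsLeftDescent, s_mul_inv_apply, s_mul_inv_apply, s_apply_self,
    s_apply_succ_self]
  omega

lemma len_s_mul_of_not_isLeftDescent {a : ℕ} {σ : Equiv.Perm ℕ} (hfin : (inversions σ).Finite)
    (h : ¬ IsLeftDescent a σ) : len (s a * σ) = len σ + 1 := by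
  have hnotMem : (σ⁻¹ a, σ⁻¹ (a + 1)) ∉ inversions σ := by
    simp [inversions]
  rw [len_eq_ncard_inversions, len_eq_ncard_inversions,
    inversions_s_mul_of_not_isLeftDescent h, Set.ncard_insert_of_notMem hnotMem hfin]

lemma finite_inversions_π (w : List ℕ) : (inversions (π w)).Finite := by
  induction w with
  | nil => simp [π, inversions_one]
  | cons a w ih =>
    rw [π_cons]
    exact (ih.insert _).subset (inversions_s_mul_subset a _)

lemma len_s_mul_of_isLeftDescent {a : ℕ} {σ : Equiv.Perm ℕ}
    (hfin : (inversions (s a * σ)).Finite)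
    (h : IsLeftDescent a σ) : len (s a * σ) + 1 = len σ := by
  have := len_s_mul_of_not_isLeftDescent hfin
    fun hdesc ↦ isLeftDescent_s_mul_self_iff.mp hdesc h
  rwa [s_mul_self_mul, eq_comm] at this

lemma len_π_le (w : List ℕ) : len (π w) ≤ w.length := by
  induction w with
  | nil => simp [π, len_eq_ncard_inversions, inversions_one]
  | cons a w ih =>
    rw [π_cons, List.length_cons]
    by_cases h : IsLeftDescent a (π w)
    · have := len_s_mul_of_isLeftDescent (by rw [← π_cons]; exact finite_inversions_π _) h
      omega
    · rw [len_s_mul_of_not_isLeftDescent (finite_inversions_π w) h]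
      omega

lemma reduced_cons_iff {σ : Equiv.Perm ℕ} {a : ℕ} {w : List ℕ} :
    Reduced σ (a :: w) ↔ IsLeftDescent a σ ∧ Reduced (s a * σ) w := by
  constructor
  · rintro ⟨hπ, hlen⟩
    have hw : π w = s a * σ := by rw [← hπ, π_cons, s_mul_self_mul]
    have hfin : (inversions (s a * σ)).Finite := hw ▸ finite_inversions_π w
    have hle : len (s a * σ) ≤ w.length := hw ▸ len_π_le w
    have hdesc : IsLeftDescent a σ := by
      by_contra hasc
      have := len_s_mul_of_not_isLeftDescent (hπ ▸ finite_inversions_π _) hasc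
      simp only [List.length_cons] at hlen
      omega
    have := len_s_mul_of_isLeftDescent hfin hdesc
    simp only [List.length_cons] at hlen
    exact ⟨hdesc, hw, by omega⟩
  · rintro ⟨hdesc, hπ, hlen⟩
    have := len_s_mul_of_isLeftDescent (hπ ▸ finite_inversions_π w) hdesc
    refine ⟨by rw [π_cons, hπ, s_mul_self_mul], ?_⟩
    simp only [List.length_cons]
    omega

lemma isLeftDescent_s_mul_iff_of_far {a b : ℕ} {σ : Equiv.Perm ℕ}
    (hab : 1 < ((a : ℤ) - (b : ℤ)).natAbs) :
    IsLeftDescent a (s b * σ) ↔ IsLeftDescent a σ := by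
  have ha : s b a = a := by rw [s_apply]; split_ifs <;> omega
  have ha' : s b (a + 1) = a + 1 := by rw [s_apply]; split_ifs <;> omega
  rw [IsLeftDescent, IsLeftDescent, s_mul_inv_apply, s_mul_inv_apply, ha, ha']

lemma isLeftDescent_s_mul_of_adjacent {a b : ℕ} {σ : Equiv.Perm ℕ}
    (hab : a = b + 1 ∨ b = a + 1) (ha : IsLeftDescent a σ) (hb : IsLeftDescent b σ) :
    IsLeftDescent a (s b * σ) ∧ IsLeftDescent b (s a * (s b * σ)) := by
  rcases hab with rfl | rfl <;>
  · simp only [IsLeftDescent, s_mul_inv_apply, s_apply] at *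
    simp only [add_assoc, Nat.reduceAdd] at *
    split_ifs <;> omega

lemma _root_.Relation.EqvGen.apply_eq {α β : Type*} {r : α → α → Prop} {f : α → β}
    (hf : ∀ a b, r a b → f a = f b) {a b : α} (h : Relation.EqvGen r a b) : f a = f b :=
  congrArg (Quot.lift f hf) (Quot.eqvGen_sound h)

lemma _root_.Relation.EqvGen.map {α β : Type*} {r : α → α → Prop} {r' : β → β → Prop}
    {f : α → β} (hf : ∀ a b, r a b → r' (f a) (f b)) {a b : α}
    (h : Relation.EqvGen r a b) :
    Relation.EqvGen r' (f a) (f b) :=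
  Quot.eqvGen_exact (h.apply_eq fun a b hab ↦ Quot.sound (hf a b hab))

lemma _root_.List.finite_length_eq_forall_mem {α : Type*} {S : Set α} (hS : S.Finite) (n : ℕ) :
    {l : List α | l.length = n ∧ ∀ x ∈ l, x ∈ S}.Finite := by
  have := hS.to_subtype
  refine ((List.finite_length_eq S n).image (List.map Subtype.val)).subset ?_
  rintro l ⟨hl, hlS⟩
  exact ⟨l.attachWith (· ∈ S) hlS, by simpa using hl, List.attachWith_map_subtype_val hlS⟩

def Move (w w' : List ℕ) : Prop := CommMove w w' ∨ BraidMove w w'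

lemma CommMove.symm {w w' : List ℕ} : CommMove w w' → CommMove w' w
  | ⟨u, v, a, b, hab, hw, hw'⟩ => ⟨u, v, b, a, by omega, hw', hw⟩

lemma BraidMove.symm {w w' : List ℕ} : BraidMove w w' → BraidMove w' w
  | ⟨u, v, a, .inl ⟨hw, hw'⟩⟩ => ⟨u, v, a, .inr ⟨hw', hw⟩⟩
  | ⟨u, v, a, .inr ⟨hw, hw'⟩⟩ => ⟨u, v, a, .inl ⟨hw', hw⟩⟩

lemma BraidMove.irrefl (w : List ℕ) : ¬ BraidMove w w := by
  rintro ⟨u, v, a, ⟨hw, hw'⟩ | ⟨hw, hw'⟩⟩ <;> simp [hw] at hw'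

lemma Move.cons {w w' : List ℕ} (c : ℕ) (h : Move w w') : Move (c :: w) (c :: w') := by
  rcases h with ⟨u, v, a, b, hab, rfl, rfl⟩ | ⟨u, v, a, ⟨rfl, rfl⟩ | ⟨rfl, rfl⟩⟩
  exacts [.inl ⟨c :: u, v, a, b, hab, rfl, rfl⟩, .inr ⟨c :: u, v, a, .inl ⟨rfl, rfl⟩⟩,
    .inr ⟨c :: u, v, a, .inr ⟨rfl, rfl⟩⟩]

lemma Move.π_eq {w w' : List ℕ} (h : Move w w') : π w = π w' := by
  rcases h with ⟨u, v, a, b, hab, rfl, rfl⟩ | ⟨u, v, a, ⟨rfl, rfl⟩ | ⟨rfl, rfl⟩⟩ <;>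
    simp only [π_append, π_cons] <;> congr 1 <;> simp only [← mul_assoc]
  · rw [s_mul_comm hab]
  · rw [s_mul_s_succ_mul_s]
  · rw [s_mul_s_succ_mul_s]

lemma Move.length_eq {w w' : List ℕ} (h : Move w w') : w.length = w'.length := by
  rcases h with ⟨u, v, a, b, hab, rfl, rfl⟩ | ⟨u, v, a, ⟨rfl, rfl⟩ | ⟨rfl, rfl⟩⟩ <;>
    simp

lemma Move.toFinset_eq {w w' : List ℕ} (h : Move w w') : w.toFinset = w'.toFinset := by
  rcases h with ⟨u, v, a, b, hab, rfl, rfl⟩ | ⟨u, v, a, ⟨rfl, rfl⟩ | ⟨rfl, rfl⟩⟩ <;>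
    ext <;> simp <;> tauto

lemma Reduced.of_eqvGen_move {σ : Equiv.Perm ℕ} {w w' : List ℕ}
    (h : Relation.EqvGen Move w w') (hw : Reduced σ w) : Reduced σ w' := by
  have := h.apply_eq (f := fun w ↦ (π w, w.length)) fun _ _ hm ↦ by rw [hm.π_eq, hm.length_eq]
  simp only [Prod.mk.injEq] at this
  exact ⟨this.1 ▸ hw.1, this.2 ▸ hw.2⟩

lemma Reduced.of_move {σ : Equiv.Perm ℕ} {w w' : List ℕ} (h : Move w w') (hw : Reduced σ w) :
    Reduced σ w' :=
  hw.of_eqvGen_move (.rel _ _ h)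

lemma eqvGen_move_cons {w w' : List ℕ} (c : ℕ) (h : Relation.EqvGen Move w w') :
    Relation.EqvGen Move (c :: w) (c :: w') :=
  h.map (f := (c :: ·)) fun _ _ ↦ Move.cons c

theorem exists_eqvGen_move_cons_of_isLeftDescent {σ : Equiv.Perm ℕ} {w : List ℕ} {a : ℕ}
    (hw : Reduced σ w) (ha : IsLeftDescent a σ) :
    ∃ v, Reduced σ (a :: v) ∧ Relation.EqvGen Move w (a :: v) := by
  obtain ⟨n, hn⟩ : ∃ n, w.length = n := ⟨_, rfl⟩
  induction n using Nat.strong_induction_on generalizing σ w a with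
  | _ n ih =>
  obtain _ | ⟨b, u⟩ := w
  · obtain rfl : 1 = σ := hw.1
    simp [IsLeftDescent] at ha
  obtain ⟨hb, hu⟩ := reduced_cons_iff.mp hw
  simp only [List.length_cons] at hn
  by_cases hab : a = b
  · subst hab
    exact ⟨u, hw, .refl _⟩
  by_cases hfar : 1 < ((a : ℤ) - (b : ℤ)).natAbs
  · obtain ⟨v, hv, huv⟩ :=
      ih u.length (by omega) hu ((isLeftDescent_s_mul_iff_of_far hfar).mpr ha) rfl
    have hswap : Move (b :: a :: v) (a :: b :: v) := .inl ⟨[], v, b, a, by omega, rfl, rfl⟩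
    refine ⟨b :: v, (reduced_cons_iff.mpr ⟨hb, hv⟩).of_move hswap, ?_⟩
    exact (eqvGen_move_cons b huv).trans _ _ _ (.rel _ _ hswap)
  -- adjacent letters: apply the induction twice to reach `b :: a :: b :: x`, then make a braid move
  have hadj : a = b + 1 ∨ b = a + 1 := by omega
  obtain ⟨ha', hb'⟩ := isLeftDescent_s_mul_of_adjacent hadj ha hb
  obtain ⟨v, hv, huv⟩ := ih u.length (by omega) hu ha' rfl
  obtain ⟨-, hv'⟩ := reduced_cons_iff.mp hv
  have hvlen : v.length + 1 = u.length := by rw [hu.2, ← hv.2, List.length_cons]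
  obtain ⟨x, hx, hvx⟩ := ih v.length (by omega) hv' hb' rfl
  have hbraid : Move (b :: a :: b :: x) (a :: b :: a :: x) := by
    rcases hadj with rfl | rfl
    · exact .inr ⟨[], x, b, .inl ⟨rfl, rfl⟩⟩
    · exact .inr ⟨[], x, a, .inr ⟨rfl, rfl⟩⟩
  have hbab : Reduced σ (b :: a :: b :: x) :=
    reduced_cons_iff.mpr ⟨hb, reduced_cons_iff.mpr ⟨ha', hx⟩⟩
  refine ⟨b :: a :: x, hbab.of_move hbraid, ?_⟩
  exact ((eqvGen_move_cons b huv).trans _ _ _ (eqvGen_move_cons b (eqvGen_move_cons a hvx))).trans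
    _ _ _ (.rel _ _ hbraid)

theorem eqvGen_move_of_reduced {σ : Equiv.Perm ℕ} {w w' : List ℕ} (hw : Reduced σ w)
    (hw' : Reduced σ w') : Relation.EqvGen Move w w' := by
  induction w' generalizing σ w with
  | nil =>
    obtain rfl : w = [] := List.eq_nil_of_length_eq_zero (hw.2.trans hw'.2.symm)
    exact .refl _
  | cons a u' ih =>
    obtain ⟨ha, hu'⟩ := reduced_cons_iff.mp hw'
    obtain ⟨v, hv, hwv⟩ := exists_eqvGen_move_cons_of_isLeftDescent hw ha
    exact hwv.trans _ _ _ (eqvGen_move_cons a (ih (reduced_cons_iff.mp hv).2 hu'))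

theorem finite_R (σ : Equiv.Perm ℕ) : (R σ).Finite := by
  obtain hempty | ⟨w₀, hw₀⟩ := (R σ).eq_empty_or_nonempty
  · simp [hempty]
  refine (List.finite_length_eq_forall_mem w₀.finite_toSet (len σ)).subset fun w hw ↦ ?_
  have hletters := (eqvGen_move_of_reduced hw hw₀).apply_eq fun _ _ hm ↦ hm.toFinset_eq
  exact ⟨hw.2, fun x hx ↦ by simpa [hletters] using List.mem_toFinset.mpr hx⟩

section QuotientCount

variable {α : Type*}

theorem card_quot_le_card_quot_or_eq_add_one [Finite α] (t : α → α → Prop) (x y : α) :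
    Nat.card (Quot t) ≤ Nat.card (Quot fun a b ↦ t a b ∨ s(a, b) = s(x, y)) + 1 := by
  classical
  set t' : α → α → Prop := fun a b ↦ t a b ∨ s(a, b) = s(x, y)
  let q : Quot t → Quot t' := Quot.map id fun _ _ ↦ Or.inl
  set P : Set (Quot t) := {Quot.mk t x, Quot.mk t y}
  have hmerge : ∀ a b, Relation.EqvGen t' a b →
      Quot.mk t a = Quot.mk t b ∨ (Quot.mk t a ∈ P ∧ Quot.mk t b ∈ P) := by
    intro a b h
    induction h with
    | rel a b hab =>
      rcases hab with hab | hab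
      · exact .inl (Quot.sound hab)
      · rcases Sym2.eq_iff.mp hab with ⟨rfl, rfl⟩ | ⟨rfl, rfl⟩ <;> simp [P]
    | refl => exact .inl rfl
    | symm _ _ _ ih => grind
    | trans _ _ _ _ _ ih₁ ih₂ => grind
  let f : Quot t → Option (Quot t') := fun c ↦ if c = Quot.mk t y then none else some (q c)
  have hf : Function.Injective f := by
    rintro ⟨a⟩ ⟨b⟩ hab
    simp only [f] at hab
    split_ifs at hab with ha hb hb
    · exact ha.trans hb.symm
    · simp only [Option.some.injEq] at hab
      rcases hmerge a b (Quot.eqvGen_exact hab) with h | ⟨ha', hb'⟩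
      · exact h
      · simp only [P, Set.mem_insert_iff, Set.mem_singleton_iff] at ha' hb'
        grind
  simpa using Nat.card_le_card_of_injective f hf

theorem card_quot_le_card_quot_or_mem_add_card [Finite α] (c : α → α → Prop)
    (S : Finset (Sym2 α)) :
    Nat.card (Quot c) ≤ Nat.card (Quot fun a b ↦ c a b ∨ s(a, b) ∈ S) + S.card := by
  classical
  induction S using Finset.induction_on with
  | empty => simp
  | insert e S he ih =>
    induction e with
    | h x y =>
    have hrel : (fun a b ↦ (c a b ∨ s(a, b) ∈ S) ∨ s(a, b) = s(x, y)) =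
        fun a b ↦ c a b ∨ s(a, b) ∈ insert s(x, y) S := by
      ext a b
      simp only [Finset.mem_insert]
      tauto
    have := card_quot_le_card_quot_or_eq_add_one (fun a b ↦ c a b ∨ s(a, b) ∈ S) x y
    rw [hrel] at this
    rw [Finset.card_insert_of_notMem he]
    omega

theorem card_quot_le_card_quot_or_adj_add_card_edgeFinset [Fintype α] (c : α → α → Prop)
    (G : SimpleGraph α) [DecidableRel G.Adj] :
    Nat.card (Quot c) ≤ Nat.card (Quot fun a b ↦ c a b ∨ G.Adj a b) + G.edgeFinset.card := by
  simpa only [SimpleGraph.mem_edgeFinset, SimpleGraph.mem_edgeSet] using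
    card_quot_le_card_quot_or_mem_add_card c G.edgeFinset

theorem card_le_card_quot_adj_add_card_edgeFinset [Fintype α] (G : SimpleGraph α)
    [DecidableRel G.Adj] : Nat.card α ≤ Nat.card (Quot G.Adj) + G.edgeFinset.card := by
  have hbot : Nat.card (Quot fun _ _ : α ↦ False) = Nat.card α := by
    refine Nat.card_congr
      (Equiv.ofBijective (Quot.mk _) ⟨fun a b hab ↦ ?_, Quot.mk_surjective⟩).symm
    exact (Quot.eqvGen_exact hab).apply_eq (f := id) fun _ _ ↦ False.elim
  simpa only [hbot, false_or] using card_quot_le_card_quot_or_adj_add_card_edgeFinset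
    (fun _ _ ↦ False) G

end QuotientCount

def braidGraph (σ : Equiv.Perm ℕ) : SimpleGraph (R σ) where
  Adj w w' := BraidMove w.1 w'.1
  symm := ⟨fun _ _ ↦ BraidMove.symm⟩
  loopless := ⟨fun w ↦ BraidMove.irrefl w.1⟩

lemma dB_eq_degree {σ : Equiv.Perm ℕ} [Fintype (R σ)] [DecidableRel (braidGraph σ).Adj]
    (w : R σ) : dB w = (braidGraph σ).degree w := by
  rw [dB, ← SimpleGraph.card_neighborSet_eq_degree, ← Nat.card_eq_fintype_card]
  exact Nat.card_congr
    { toFun w' :=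
        ⟨⟨w'.1, w.2.of_move (.inr w'.2)⟩, (SimpleGraph.mem_neighborSet _ _ _).mpr w'.2⟩
      invFun w' := ⟨w'.1.1, (SimpleGraph.mem_neighborSet _ _ _).mp w'.2⟩ }

lemma card_quot_move_le_one (σ : Equiv.Perm ℕ) :
    Nat.card (Quot fun w w' : R σ ↦ Move w.1 w'.1) ≤ 1 := by
  have hmk : ∀ w w', Relation.EqvGen Move w w' → ∀ (hw : Reduced σ w) (hw' : Reduced σ w'),
      Quot.mk (fun w w' : R σ ↦ Move w.1 w'.1) ⟨w, hw⟩ = Quot.mk _ ⟨w', hw'⟩ := by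
    intro w w' h
    induction h with
    | rel _ _ hmove => exact fun _ _ ↦ Quot.sound hmove
    | refl => exact fun _ _ ↦ rfl
    | symm _ _ _ ih => exact fun hw hw' ↦ (ih hw' hw).symm
    | trans _ _ _ h₁ _ ih₁ ih₂ =>
      exact fun hw hw' ↦ (ih₁ hw (hw.of_eqvGen_move h₁)).trans (ih₂ _ hw')
  have := (finite_R σ).to_subtype
  refine Finite.card_le_one_iff_subsingleton.mpr ⟨?_⟩
  rintro ⟨w⟩ ⟨w'⟩
  exact hmk _ _ (eqvGen_move_of_reduced w.2 w'.2) w.2 w'.2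

theorem statement_18_general (σ : Equiv.Perm ℕ)
    (h : ∑ᶠ w ∈ R σ, dB w ≤ Nat.card (R σ)) :
    (nB σ : ℝ) ≥ (1 / 2) * (Nat.card (R σ) : ℝ) - 1 ∧
    (nC σ : ℝ) ≤ (1 / 2) * (Nat.card (R σ) : ℝ) + 2 := by
  classical
  have := (finite_R σ).fintype
  have hedges : 2 * (braidGraph σ).edgeFinset.card ≤ Nat.card (R σ) := by
    rw [← SimpleGraph.sum_degrees_eq_twice_card_edges, ← finsum_eq_sum_of_fintype]
    simp only [← dB_eq_degree]
    rwa [finsum_set_coe_eq_finsum_mem (f := dB)]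
  have hB : Nat.card (R σ) ≤ nB σ + (braidGraph σ).edgeFinset.card :=
    card_le_card_quot_adj_add_card_edgeFinset (braidGraph σ)
  have hC : nC σ ≤ 1 + (braidGraph σ).edgeFinset.card :=
    (card_quot_le_card_quot_or_adj_add_card_edgeFinset _ (braidGraph σ)).trans
      (Nat.add_le_add_right (card_quot_move_le_one σ) _)
  generalize (braidGraph σ).edgeFinset.card = E at hedges hB hC
  have hedges' : (2 * E : ℝ) ≤ Nat.card (R σ) := by exact_mod_cast hedges
  have hB' : (Nat.card (R σ) : ℝ) ≤ nB σ + E := by exact_mod_cast hB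
  have hC' : (nC σ : ℝ) ≤ 1 + E := by exact_mod_cast hC
  constructor <;> linarith

/-- if `σ ∈ S_n` satisfies `Σ_{w ∈ R σ} d_B(w) ≤ |R σ|`, then
`|B(σ)| ≥ (1/2)|R σ| − 1` and `|C(σ)| ≤ (1/2)|R σ| + 2`. -/
theorem statement_18 (n : ℕ) (σ : Equiv.Perm ℕ) (hσ : σ ∈ Sn n)
    (h : ∑ᶠ w ∈ R σ, dB w ≤ Nat.card (R σ)) :
    (nB σ : ℝ) ≥ (1 / 2) * (Nat.card (R σ) : ℝ) - 1 ∧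
    (nC σ : ℝ) ≤ (1 / 2) * (Nat.card (R σ) : ℝ) + 2 :=
  statement_18_general σ h

end RW
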